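/- The squared norm of the improper-proper kernel satisfies ∫₀^∞ Σ_{k=0}^{ν−1} ‖h_ip(t,k)‖₂² dt = trace(P_i·M·P_p·M), where h_ip(t,k) := vec(B^T·F_N(k)^T·M·F_J(t)·B) and ‖·‖₂ is the Euclidean norm on ℝ^{m²}. -/

import Mathlib

/-!
Writing `H = Bᵀ F_N(k)ᵀ M F_J(t) B`, we have `‖vec H‖² = tr (H Hᵀ)`, and cyclicity of the trace
together with `Mᵀ = M` turns this into `tr (M X_k M Y(t))` with `X_k = F_N(k) B Bᵀ F_N(k)ᵀ` and
`Y(t) = F_J(t) B Bᵀ F_J(t)ᵀ`. Summing over `k` gives `tr (M P_i M Y(t))`, which is linear in `Y(t)`,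
so the integral passes inside the trace once the entries of `Y` are integrable on `(0, ∞)`. They are,
since `Y = (F_J B)(F_J B)ᵀ` and the entries of `F_J(t) B` are square-integrable: they are linear
combinations of entries of `exp (tJ)`, each bounded by `‖exp (tJ)‖ ≤ C e^{-αt}`.
-/

open MeasureTheory Matrix

/-- The matrix exponential of a real square matrix. -/
noncomputable def mexp {d : ℕ} (X : Matrix (Fin d) (Fin d) ℝ) : Matrix (Fin d) (Fin d) ℝ :=
  NormedSpace.exp X

/-- The operator norm on real matrices, induced by the Euclidean (`ℓ²`) norms. -/
noncomputable def opNorm {d e : ℕ} (X : Matrix (Fin d) (Fin e) ℝ) : ℝ :=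
  letI := Matrix.instL2OpNormedAddCommGroup (m := Fin d) (n := Fin e) (𝕜 := ℝ)
  ‖X‖

/-- Entrywise integral over `(0, ∞)` of a matrix-valued function. -/
noncomputable def matIntIoi {a b : Type*} (F : ℝ → Matrix a b ℝ) : Matrix a b ℝ :=
  Matrix.of fun i j => ∫ t in Set.Ioi (0:ℝ), F t i j

/-- Entrywise integrability over `(0, ∞)` of a matrix-valued function. -/
def MatIntegrableIoi {a b : Type*} (F : ℝ → Matrix a b ℝ) : Prop :=
  ∀ i j, MeasureTheory.IntegrableOn (fun t => F t i j) (Set.Ioi 0)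

/-- Kronecker product of two vectors in `ℝ^m`, an element of `ℝ^{m²}`. -/
def kron {m : ℕ} (a b : Fin m → ℝ) : Fin m × Fin m → ℝ := fun p => a p.1 * b p.2

/-- Vectorization of an `m × m` matrix as an element of `ℝ^{m²}`. -/
def vecm {m : ℕ} (X : Matrix (Fin m) (Fin m) ℝ) : Fin m × Fin m → ℝ := fun p => X p.1 p.2

/-- Squared Euclidean norm of a vector. -/
def enormSq {ι : Type*} [Fintype ι] (v : ι → ℝ) : ℝ := ∑ i, (v i) ^ 2

/-- Euclidean inner product of two vectors. -/
def dotv {ι : Type*} [Fintype ι] (v w : ι → ℝ) : ℝ := ∑ i, v i * w i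

lemma abs_apply_le_opNorm {d e : ℕ} (X : Matrix (Fin d) (Fin e) ℝ) (i : Fin d) (j : Fin e) :
    |X i j| ≤ opNorm X := by
  let := Matrix.instL2OpNormedAddCommGroup (m := Fin d) (n := Fin e) (𝕜 := ℝ)
  set v := (EuclideanSpace.equiv (Fin d) ℝ).symm (X *ᵥ EuclideanSpace.single j 1)
  have hv : ‖v‖ ≤ ‖X‖ := by
    simpa only [PiLp.norm_single, norm_one, mul_one] using
      X.l2_opNorm_mulVec (EuclideanSpace.single j 1)
  calc |X i j| = ‖v i‖ := by simp [v]
    _ ≤ ‖v‖ := PiLp.norm_apply_le v i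
    _ ≤ opNorm X := hv

lemma continuous_mexp_smul_apply {d : ℕ} (J : Matrix (Fin d) (Fin d) ℝ) (i j : Fin d) :
    Continuous fun t : ℝ => mexp (t • J) i j := by
  -- any normed-algebra structure inducing the product topology unlocks `exp_continuous`
  let : NormedRing (Matrix (Fin d) (Fin d) ℝ) := Matrix.linftyOpNormedRing
  let : NormedAlgebra ℝ (Matrix (Fin d) (Fin d) ℝ) := Matrix.linftyOpNormedAlgebra
  let : NormedAlgebra ℚ (Matrix (Fin d) (Fin d) ℝ) := NormedAlgebra.restrictScalars ℚ ℝ _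
  have : Continuous fun t : ℝ => NormedSpace.exp (t • J) :=
    NormedSpace.exp_continuous.comp (continuous_id.smul continuous_const)
  exact ((continuous_apply j).comp (continuous_apply i)).comp this

lemma memLp_two_Ioi_of_abs_le_exp {f : ℝ → ℝ} (hf : Continuous f) {C α : ℝ} (hα : 0 < α)
    (hbound : ∀ t, 0 < t → |f t| ≤ C * Real.exp (-α * t)) :
    MemLp f 2 (volume.restrict (Set.Ioi 0)) := by
  rw [memLp_two_iff_integrable_sq hf.aestronglyMeasurable]
  have hdom : IntegrableOn (fun t => C ^ 2 * Real.exp (-(2 * α) * t)) (Set.Ioi 0) :=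
    (exp_neg_integrableOn_Ioi 0 (by positivity)).const_mul _
  refine hdom.mono' (hf.pow 2).aestronglyMeasurable ?_
  filter_upwards [self_mem_ae_restrict measurableSet_Ioi] with t ht
  calc ‖f t ^ 2‖ = |f t| ^ 2 := by simp
    _ ≤ (C * Real.exp (-α * t)) ^ 2 := pow_le_pow_left₀ (abs_nonneg _) (hbound t ht) 2
    _ = C ^ 2 * Real.exp (-(2 * α) * t) := by
        rw [mul_pow, ← Real.exp_nat_mul]; ring_nf

section EntrywiseLp

variable {X ι κ ο ρ : Type*} [MeasurableSpace X] {μ : Measure X} {p : ENNReal}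

lemma memLp_mul_mul_apply [Fintype κ] [Fintype ο] {F : X → Matrix κ ο ℝ}
    (hF : ∀ i j, MemLp (fun x => F x i j) p μ) (P : Matrix ι κ ℝ) (Q : Matrix ο ρ ℝ)
    (i : ι) (j : ρ) : MemLp (fun x => (P * F x * Q) i j) p μ := by
  simp only [mul_apply, Finset.sum_mul]
  exact memLp_finsetSum _ fun l _ => memLp_finsetSum _ fun k _ =>
    ((hF k l).const_mul (P i k)).mul_const (Q l j)

lemma memLp_fromBlocks_zero_apply {F : X → Matrix κ ο ℝ}
    (hF : ∀ i j, MemLp (fun x => F x i j) p μ) (u : κ ⊕ ι) (v : ο ⊕ ρ) :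
    MemLp (fun x => (fromBlocks (F x) 0 0 0 : Matrix (κ ⊕ ι) (ο ⊕ ρ) ℝ) u v) p μ := by
  rcases u with i | i <;> rcases v with j | j
  · exact hF i j
  all_goals exact MemLp.zero

lemma integrable_mul_transpose_apply [Fintype κ] {F G : X → Matrix ι κ ℝ}
    (hF : ∀ i j, MemLp (fun x => F x i j) 2 μ) (hG : ∀ i j, MemLp (fun x => G x i j) 2 μ)
    (i j : ι) : Integrable (fun x => (F x * (G x)ᵀ) i j) μ := by
  simp only [mul_apply, transpose_apply]
  exact integrable_finsetSum _ fun k _ => (hF i k).integrable_mul (hG j k)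

end EntrywiseLp

lemma trace_mul_matIntIoi {n : Type*} [Fintype n] (X : Matrix n n ℝ) {Y : ℝ → Matrix n n ℝ}
    (hY : MatIntegrableIoi Y) :
    trace (X * matIntIoi Y) = ∫ t in Set.Ioi 0, trace (X * Y t) := by
  have hXY : ∀ i j, IntegrableOn (fun t => X i j * Y t j i) (Set.Ioi 0) :=
    fun i j => (hY j i).const_mul _
  simp only [trace, diag, mul_apply, matIntIoi, of_apply]
  rw [integral_finsetSum _ fun i _ => integrable_finsetSum _ fun j _ => hXY i j]
  refine Finset.sum_congr rfl fun i _ => ?_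
  rw [integral_finsetSum _ fun j _ => hXY i j]
  simp only [integral_const_mul]

lemma enormSq_vecm {m : ℕ} (G : Matrix (Fin m) (Fin m) ℝ) : enormSq (vecm G) = trace (G * Gᵀ) := by
  simp [enormSq, vecm, trace, mul_apply, pow_two, Fintype.sum_prod_type]

lemma enormSq_vecm_eq_trace {m : ℕ} {n : Type*} [Fintype n] (B : Matrix n (Fin m) ℝ)
    {M : Matrix n n ℝ} (hM : M.IsSymm) (F G : Matrix n n ℝ) :
    enormSq (vecm (Bᵀ * Fᵀ * M * G * B)) =
      trace (M * (F * B * Bᵀ * Fᵀ) * M * (G * B * Bᵀ * Gᵀ)) := by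
  rw [enormSq_vecm]
  calc trace (Bᵀ * Fᵀ * M * G * B * (Bᵀ * Fᵀ * M * G * B)ᵀ)
      = trace ((Bᵀ * Fᵀ * M * G * B * Bᵀ * Gᵀ) * (M * F * B)) := by
        simp only [transpose_mul, transpose_transpose, hM.eq, Matrix.mul_assoc]
    _ = trace (M * (F * B * Bᵀ * Fᵀ) * M * (G * B * Bᵀ * Gᵀ)) := by
        rw [trace_mul_comm]; simp only [Matrix.mul_assoc]

theorem improper_proper_kernel_norm_eq_trace_general
    {nf ni m : ℕ} (ν : ℕ)
    -- Weierstraß canonical form data for the full-order system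
    (Winv Tinv : Matrix (Fin nf ⊕ Fin ni) (Fin nf ⊕ Fin ni) ℝ)
    (J : Matrix (Fin nf) (Fin nf) ℝ)
    (C α : ℝ) (hα : 0 < α)
    (hJ : ∀ t : ℝ, 0 ≤ t → opNorm (mexp (t • J)) ≤ C * Real.exp (-α * t))
    (B : Matrix (Fin nf ⊕ Fin ni) (Fin m) ℝ)
    (M : Matrix (Fin nf ⊕ Fin ni) (Fin nf ⊕ Fin ni) ℝ) (hM : M.IsSymm)
    -- fundamental solution matrices
    (FJ : ℝ → Matrix (Fin nf ⊕ Fin ni) (Fin nf ⊕ Fin ni) ℝ)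
    (hFJ : ∀ t : ℝ, FJ t = Tinv * fromBlocks (mexp (t • J)) 0 0 0 * Winv)
    (FN : ℕ → Matrix (Fin nf ⊕ Fin ni) (Fin nf ⊕ Fin ni) ℝ)
    -- proper and improper controllability Gramians
    (Pp : Matrix (Fin nf ⊕ Fin ni) (Fin nf ⊕ Fin ni) ℝ)
    (hPp : Pp = matIntIoi fun t => FJ t * B * Bᵀ * (FJ t)ᵀ)
    (Pimp : Matrix (Fin nf ⊕ Fin ni) (Fin nf ⊕ Fin ni) ℝ)
    (hPimp : Pimp = ∑ k ∈ Finset.range ν, FN k * B * Bᵀ * (FN k)ᵀ)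
    -- the improper-proper kernel
    (hip : ℝ → ℕ → Fin m × Fin m → ℝ)
    (hhip : ∀ (t : ℝ) (k : ℕ), hip t k = vecm (Bᵀ * (FN k)ᵀ * M * FJ t * B)) :
    (∫ t in Set.Ioi (0:ℝ), ∑ k ∈ Finset.range ν, enormSq (hip t k)) =
      Matrix.trace (Pimp * M * Pp * M) := by
  have hexp : ∀ i j, MemLp (fun t : ℝ => mexp (t • J) i j) 2 (volume.restrict (Set.Ioi 0)) :=
    fun i j => memLp_two_Ioi_of_abs_le_exp (continuous_mexp_smul_apply J i j) hα
      fun t ht => (abs_apply_le_opNorm _ i j).trans (hJ t ht.le)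
  have hFJB : ∀ p a, MemLp (fun t => (FJ t * B) p a) 2 (volume.restrict (Set.Ioi 0)) := by
    simpa only [hFJ, Matrix.mul_assoc] using
      memLp_mul_mul_apply (memLp_fromBlocks_zero_apply (ι := Fin ni) (ρ := Fin ni) hexp)
        Tinv (Winv * B)
  have hint : MatIntegrableIoi fun t => FJ t * B * Bᵀ * (FJ t)ᵀ := fun p q => by
    have := integrable_mul_transpose_apply hFJB hFJB p q
    simp only [transpose_mul, Matrix.mul_assoc] at this ⊢
    exact this
  calc (∫ t in Set.Ioi (0:ℝ), ∑ k ∈ Finset.range ν, enormSq (hip t k))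
      = ∫ t in Set.Ioi (0:ℝ), trace (M * Pimp * M * (FJ t * B * Bᵀ * (FJ t)ᵀ)) := by
        simp only [hhip, enormSq_vecm_eq_trace B hM, hPimp, Finset.mul_sum, Finset.sum_mul,
          trace_sum]
    _ = trace (Pimp * M * Pp * M) := by
        rw [hPp, ← trace_mul_matIntIoi _ hint, Matrix.mul_assoc, Matrix.mul_assoc,
          trace_mul_comm]
        simp only [Matrix.mul_assoc]

/-- `∫₀^∞ ∑_{k<ν} ‖h_ip(t,k)‖₂² dt = trace(P_i·M·P_p·M)`. -/
theorem improper_proper_kernel_norm_eq_trace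
    {nf ni m : ℕ} (hm : 0 < m) (ν : ℕ) (hν : 0 < ν)
    -- Weierstraß canonical form data for the full-order system
    (W T Winv Tinv : Matrix (Fin nf ⊕ Fin ni) (Fin nf ⊕ Fin ni) ℝ)
    (hW : W * Winv = 1) (hW' : Winv * W = 1)
    (hT : T * Tinv = 1) (hT' : Tinv * T = 1)
    (J : Matrix (Fin nf) (Fin nf) ℝ) (N : Matrix (Fin ni) (Fin ni) ℝ) (hN : N ^ ν = 0)
    (C α : ℝ) (hC : 0 < C) (hα : 0 < α)
    (hJ : ∀ t : ℝ, 0 ≤ t → opNorm (mexp (t • J)) ≤ C * Real.exp (-α * t))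
    (E A : Matrix (Fin nf ⊕ Fin ni) (Fin nf ⊕ Fin ni) ℝ)
    (hE : E = W * fromBlocks 1 0 0 N * T)
    (hA : A = W * fromBlocks J 0 0 1 * T)
    (B : Matrix (Fin nf ⊕ Fin ni) (Fin m) ℝ)
    (M : Matrix (Fin nf ⊕ Fin ni) (Fin nf ⊕ Fin ni) ℝ) (hM : M.IsSymm)
    -- spectral projectors
    (Pr Pl : Matrix (Fin nf ⊕ Fin ni) (Fin nf ⊕ Fin ni) ℝ)
    (hPr : Pr = Tinv * fromBlocks 1 0 0 0 * T)
    (hPl : Pl = W * fromBlocks 1 0 0 0 * Winv)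
    -- fundamental solution matrices
    (FJ : ℝ → Matrix (Fin nf ⊕ Fin ni) (Fin nf ⊕ Fin ni) ℝ)
    (hFJ : ∀ t : ℝ, FJ t = Tinv * fromBlocks (mexp (t • J)) 0 0 0 * Winv)
    (FN : ℕ → Matrix (Fin nf ⊕ Fin ni) (Fin nf ⊕ Fin ni) ℝ)
    (hFN : ∀ k : ℕ, FN k = Tinv * fromBlocks 0 0 0 (-(N ^ k)) * Winv)
    -- proper and improper controllability Gramians
    (Pp : Matrix (Fin nf ⊕ Fin ni) (Fin nf ⊕ Fin ni) ℝ)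
    (hPp : Pp = matIntIoi fun t => FJ t * B * Bᵀ * (FJ t)ᵀ)
    (Pimp : Matrix (Fin nf ⊕ Fin ni) (Fin nf ⊕ Fin ni) ℝ)
    (hPimp : Pimp = ∑ k ∈ Finset.range ν, FN k * B * Bᵀ * (FN k)ᵀ)
    -- the improper-proper kernel
    (hip : ℝ → ℕ → Fin m × Fin m → ℝ)
    (hhip : ∀ (t : ℝ) (k : ℕ), hip t k = vecm (Bᵀ * (FN k)ᵀ * M * FJ t * B)) :
    (∫ t in Set.Ioi (0:ℝ), ∑ k ∈ Finset.range ν, enormSq (hip t k)) =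
      Matrix.trace (Pimp * M * Pp * M) :=
  improper_proper_kernel_norm_eq_trace_general ν Winv Tinv J C α hα hJ B M hM FJ hFJ FN Pp hPp Pimp
    hPimp hip hhip
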